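/- Let ρ ∈ (0,1) and A_{0,n} be the n×n tridiagonal matrix with diagonal (1+ρ², ..., 1+ρ², 1), off-diagonal entries -ρ. For each fixed j ≥ 1, the j-th smallest eigenvalue of A_{0,n} converges to (1-ρ)² and the j-th largest eigenvalue converges to (1+ρ)² as n → ∞. -/

import Mathlib

open Filter Matrix Finset

/-- The eigenvalues of a Hermitian matrix, listed in increasing order with multiplicity. -/
noncomputable def sortedEig {n : ℕ} {A : Matrix (Fin n) (Fin n) ℝ}
    (hA : A.IsHermitian) : Fin n → ℝ :=
  hA.eigenvalues ∘ Tuple.sort hA.eigenvalues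

namespace Stmt12

/-- extension of a vector by zero to all of ℕ -/
def ext {N : ℕ} (x : Fin N → ℝ) : ℕ → ℝ := fun t => if h : t < N then x ⟨t, h⟩ else 0

/-- predecessor value, with `pre x 0 = 0` -/
def pre {N : ℕ} (x : Fin N → ℝ) : ℕ → ℝ := fun t => if t = 0 then 0 else ext x (t - 1)

lemma ext_apply {N : ℕ} (x : Fin N → ℝ) (i : Fin N) : ext x (i : ℕ) = x i := by
  simp [ext, i.isLt]

lemma sum_ite_coe {N : ℕ} (x : Fin N → ℝ) (m : ℕ) (c : ℝ) :
    (∑ k : Fin N, (if (k : ℕ) = m then c else 0) * x k) = c * ext x m := by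
  by_cases h : m < N
  · rw [Finset.sum_eq_single ⟨m, h⟩]
    · simp [ext, h]
    · intro k _ hk
      have : (k : ℕ) ≠ m := by simpa [Fin.ext_iff] using hk
      simp [this]
    · simp
  · rw [Finset.sum_eq_zero, ext]
    · simp [dif_neg h]
    · intro k _
      have : (k : ℕ) ≠ m := by have := k.isLt; omega
      simp [this]

lemma sum_ite_coe' {N : ℕ} (x : Fin N → ℝ) (m : ℕ) (c : ℝ) :
    (∑ k : Fin N, (if (k : ℕ) + 1 = m then c else 0) * x k) = c * pre x m := by
  cases m with
  | zero => simp [pre]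
  | succ m' =>
      have h : ∀ k : Fin N, ((if (k : ℕ) + 1 = m' + 1 then c else 0) * x k)
          = (if (k : ℕ) = m' then c else 0) * x k := by intro k; simp
      rw [Finset.sum_congr rfl (fun k _ => h k), sum_ite_coe]
      simp [pre]

variable {ρ : ℝ}

lemma entry_decomp {N : ℕ} {A : Matrix (Fin N) (Fin N) ℝ}
    (hAdef : ∀ i k : Fin N, A i k =
      if i = k then (if (i : ℕ) = N - 1 then 1 else 1 + ρ ^ 2)
      else if (i : ℕ) + 1 = k ∨ (k : ℕ) + 1 = i then -ρ else 0)
    (i k : Fin N) :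
    A i k = (if i = k then (if (i : ℕ) = N - 1 then 1 else 1 + ρ ^ 2) else 0)
      + (if (k : ℕ) = (i : ℕ) + 1 then -ρ else 0)
      + (if (k : ℕ) + 1 = (i : ℕ) then -ρ else 0) := by
  rw [hAdef]
  rcases eq_or_ne i k with rfl | h
  · have h1 : ¬ ((i:ℕ) = (i:ℕ) + 1) := by omega
    have h2 : ¬ ((i:ℕ) + 1 = (i:ℕ)) := by omega
    simp [h1, h2]
  · have h' : (i : ℕ) ≠ (k : ℕ) := fun hc => h (Fin.ext hc)
    rw [if_neg h, if_neg h]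
    by_cases h1 : (i : ℕ) + 1 = (k : ℕ)
    · have h2 : ¬ ((k : ℕ) + 1 = (i : ℕ)) := by omega
      rw [if_pos (Or.inl h1), if_pos h1.symm, if_neg h2]; ring
    · by_cases h2 : (k : ℕ) + 1 = (i : ℕ)
      · have h3 : ¬ ((k:ℕ) = (i:ℕ) + 1) := by omega
        rw [if_pos (Or.inr h2), if_neg h3, if_pos h2]; ring
      · have h3 : ¬ ((k:ℕ) = (i:ℕ) + 1) := by omega
        rw [if_neg (by tauto : ¬((i:ℕ)+1 = (k:ℕ) ∨ (k:ℕ)+1 = (i:ℕ))), if_neg h3, if_neg h2]; ring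

lemma mulVec_eq {N : ℕ} {A : Matrix (Fin N) (Fin N) ℝ}
    (hAdef : ∀ i k : Fin N, A i k =
      if i = k then (if (i : ℕ) = N - 1 then 1 else 1 + ρ ^ 2)
      else if (i : ℕ) + 1 = k ∨ (k : ℕ) + 1 = i then -ρ else 0)
    (x : Fin N → ℝ) (i : Fin N) :
    (A *ᵥ x) i = (if (i : ℕ) = N - 1 then 1 else 1 + ρ ^ 2) * x i
      + (-ρ) * ext x ((i : ℕ) + 1) + (-ρ) * pre x (i : ℕ) := by
  show (∑ k, A i k * x k) = _
  rw [Finset.sum_congr rfl (fun k _ => by rw [entry_decomp hAdef i k])]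
  simp only [add_mul]
  rw [Finset.sum_add_distrib, Finset.sum_add_distrib, sum_ite_coe, sum_ite_coe']
  congr 1
  congr 1
  rw [Finset.sum_eq_single i]
  · simp
  · intro k _ hk; simp [Ne.symm hk]
  · simp


lemma quadForm {N : ℕ} {A : Matrix (Fin N) (Fin N) ℝ}
    (hAdef : ∀ i k : Fin N, A i k =
      if i = k then (if (i : ℕ) = N - 1 then 1 else 1 + ρ ^ 2)
      else if (i : ℕ) + 1 = k ∨ (k : ℕ) + 1 = i then -ρ else 0)
    (x : Fin N → ℝ) :
    x ⬝ᵥ (A *ᵥ x) = ∑ t ∈ Finset.range N, (ext x t - ρ * pre x t) ^ 2 := by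
  have hgN : ∀ t, N ≤ t → ext x t = 0 := fun t ht => dif_neg (by omega)
  have step1 : x ⬝ᵥ (A *ᵥ x)
      = ∑ t ∈ Finset.range N, (ext x t * ((if t = N - 1 then 1 else 1 + ρ ^ 2) * ext x t
          + (-ρ) * ext x (t + 1) + (-ρ) * pre x t)) := by
    rw [← Fin.sum_univ_eq_sum_range]
    show (∑ i, x i * (A *ᵥ x) i) = _
    refine Finset.sum_congr rfl fun i _ => ?_
    rw [mulVec_eq hAdef, ext_apply]
  rw [step1]
  rcases Nat.eq_zero_or_pos N with rfl | hN
  · simp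
  obtain ⟨M, rfl⟩ : ∃ M, N = M + 1 := ⟨N - 1, by omega⟩
  set g := ext x with hg
  set p := pre x with hp
  have hpre0 : p 0 = 0 := by simp [hp, pre]
  have hpres : ∀ t, p (t + 1) = g t := fun t => by simp [hp, pre, hg]
  have e1 : ∑ t ∈ range (M + 1), g t * g (t + 1) = ∑ t ∈ range (M + 1), g t * p t := by
    rw [Finset.sum_range_succ, Finset.sum_range_succ' (fun t => g t * p t), hpre0,
      hgN (M + 1) le_rfl]
    simp only [hpres, mul_zero, add_zero, mul_comm]
    ring
  have e2 : ∑ t ∈ range (M + 1), p t ^ 2 = ∑ t ∈ range M, g t ^ 2 := by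
    rw [Finset.sum_range_succ' (fun t => p t ^ 2), hpre0]
    simp [hpres]
  have e3 : ∑ t ∈ range (M + 1), (if t = (M+1) - 1 then (1:ℝ) else 1 + ρ ^ 2) * g t ^ 2
      = ∑ t ∈ range (M + 1), g t ^ 2 + ρ ^ 2 * ∑ t ∈ range M, g t ^ 2 := by
    rw [Finset.sum_range_succ, Finset.sum_range_succ (fun t => g t ^ 2)]
    rw [Finset.sum_congr rfl (fun t ht => by
      rw [if_neg (by have := Finset.mem_range.mp ht; omega)])]
    rw [if_pos (by omega), Finset.sum_congr rfl (fun t _ => (add_mul 1 (ρ^2) (g t ^2))),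
      Finset.sum_add_distrib, ← Finset.mul_sum, ← Finset.mul_sum]
    ring
  have lhs : ∑ t ∈ range (M+1), (g t * ((if t = (M+1) - 1 then (1:ℝ) else 1 + ρ ^ 2) * g t
          + (-ρ) * g (t + 1) + (-ρ) * p t))
      = ∑ t ∈ range (M+1), (if t = (M+1) - 1 then (1:ℝ) else 1 + ρ ^ 2) * g t ^ 2
        - ρ * ∑ t ∈ range (M+1), g t * g (t + 1) - ρ * ∑ t ∈ range (M+1), g t * p t := by
    rw [Finset.mul_sum, Finset.mul_sum, ← Finset.sum_sub_distrib, ← Finset.sum_sub_distrib]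
    exact Finset.sum_congr rfl fun t _ => by ring
  have rhs : ∑ t ∈ range (M+1), (g t - ρ * p t) ^ 2
      = ∑ t ∈ range (M+1), g t ^ 2 - 2 * ρ * ∑ t ∈ range (M+1), g t * p t
        + ρ ^ 2 * ∑ t ∈ range (M+1), p t ^ 2 := by
    rw [Finset.mul_sum, Finset.mul_sum, ← Finset.sum_sub_distrib, ← Finset.sum_add_distrib]
    exact Finset.sum_congr rfl fun t _ => by ring
  rw [lhs, rhs, e1, e2, e3]
  ring

lemma normSq {N : ℕ} (x : Fin N → ℝ) :
    x ⬝ᵥ x = ∑ t ∈ Finset.range N, (ext x t) ^ 2 := by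
  rw [← Fin.sum_univ_eq_sum_range (fun t => (ext x t) ^ 2)]
  show (∑ i, x i * x i) = _
  exact Finset.sum_congr rfl fun i _ => by rw [ext_apply]; ring

lemma sum_pre_le {N : ℕ} (x : Fin N → ℝ) :
    ∑ t ∈ Finset.range N, (pre x t) ^ 2 ≤ ∑ t ∈ Finset.range N, (ext x t) ^ 2 := by
  rcases Nat.eq_zero_or_pos N with rfl | hN
  · simp
  obtain ⟨M, rfl⟩ : ∃ M, N = M + 1 := ⟨N - 1, by omega⟩
  have e2 : ∑ t ∈ range (M + 1), (pre x t) ^ 2 = ∑ t ∈ range M, (ext x t) ^ 2 := by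
    rw [Finset.sum_range_succ' (fun t => (pre x t) ^ 2)]
    simp [pre]
  rw [e2]
  exact Finset.sum_le_sum_of_subset_of_nonneg
    (Finset.range_subset_range.mpr (by omega)) (fun t _ _ => sq_nonneg _)

lemma quad_bounds {N : ℕ} {A : Matrix (Fin N) (Fin N) ℝ}
    (hρ₀ : 0 < ρ) (hρ₁ : ρ < 1)
    (hAdef : ∀ i k : Fin N, A i k =
      if i = k then (if (i : ℕ) = N - 1 then 1 else 1 + ρ ^ 2)
      else if (i : ℕ) + 1 = k ∨ (k : ℕ) + 1 = i then -ρ else 0)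
    (x : Fin N → ℝ) :
    (1 - ρ) ^ 2 * (x ⬝ᵥ x) ≤ x ⬝ᵥ (A *ᵥ x) ∧ x ⬝ᵥ (A *ᵥ x) ≤ (1 + ρ) ^ 2 * (x ⬝ᵥ x) := by
  rw [quadForm hAdef, normSq]
  set g := ext x
  set p := pre x
  set S := ∑ t ∈ range N, g t ^ 2 with hS
  set P := ∑ t ∈ range N, p t ^ 2 with hP
  have hPS : P ≤ S := sum_pre_le x
  have hP0 : 0 ≤ P := Finset.sum_nonneg fun t _ => sq_nonneg _
  constructor
  · have key : ∑ t ∈ range N, ((1 - ρ) * (g t ^ 2 - ρ * p t ^ 2))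
        ≤ ∑ t ∈ range N, (g t - ρ * p t) ^ 2 := by
      refine Finset.sum_le_sum fun t _ => ?_
      nlinarith [mul_nonneg hρ₀.le (sq_nonneg (g t - p t))]
    have expand : (1 - ρ) * (S - ρ * P) = ∑ t ∈ range N, ((1 - ρ) * (g t ^ 2 - ρ * p t ^ 2)) := by
      rw [hS, hP, Finset.mul_sum, ← Finset.sum_sub_distrib, Finset.mul_sum]
    nlinarith [key, expand, mul_nonneg (mul_nonneg (by linarith : (0:ℝ) ≤ 1 - ρ) hρ₀.le) (sub_nonneg.mpr hPS)]
  · have key : ∑ t ∈ range N, (g t - ρ * p t) ^ 2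
        ≤ ∑ t ∈ range N, ((1 + ρ) * (g t ^ 2 + ρ * p t ^ 2)) := by
      refine Finset.sum_le_sum fun t _ => ?_
      nlinarith [mul_nonneg hρ₀.le (sq_nonneg (g t + p t))]
    have expand : (1 + ρ) * (S + ρ * P) = ∑ t ∈ range N, ((1 + ρ) * (g t ^ 2 + ρ * p t ^ 2)) := by
      rw [hS, hP, Finset.mul_sum, ← Finset.sum_add_distrib, Finset.mul_sum]
    nlinarith [key, expand, mul_nonneg (mul_nonneg (by linarith : (0:ℝ) ≤ 1 + ρ) hρ₀.le) (sub_nonneg.mpr hPS)]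


lemma sum_dotProduct' {ι : Type*} {N : ℕ} (s : Finset ι) (f : ι → Fin N → ℝ) (w : Fin N → ℝ) :
    (∑ i ∈ s, f i) ⬝ᵥ w = ∑ i ∈ s, f i ⬝ᵥ w := by
  simp only [dotProduct, Finset.sum_apply, Finset.sum_mul]
  exact Finset.sum_comm

lemma dotProduct_sum' {ι : Type*} {N : ℕ} (s : Finset ι) (w : Fin N → ℝ) (f : ι → Fin N → ℝ) :
    w ⬝ᵥ (∑ i ∈ s, f i) = ∑ i ∈ s, w ⬝ᵥ f i := by
  simp only [dotProduct, Finset.sum_apply, Finset.mul_sum]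
  exact Finset.sum_comm

lemma dot_eigb {N : ℕ} {A : Matrix (Fin N) (Fin N) ℝ} (hA : A.IsHermitian) (i i' : Fin N) :
    (⇑(hA.eigenvectorBasis i) : Fin N → ℝ) ⬝ᵥ ⇑(hA.eigenvectorBasis i')
      = if i = i' then 1 else 0 := by
  have h := orthonormal_iff_ite.mp hA.eigenvectorBasis.orthonormal i i'
  rw [dotProduct_comm]
  simpa [PiLp.inner_apply, dotProduct] using h

lemma eig_bounds {N : ℕ} {A : Matrix (Fin N) (Fin N) ℝ}
    (hρ₀ : 0 < ρ) (hρ₁ : ρ < 1)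
    (hAdef : ∀ i k : Fin N, A i k =
      if i = k then (if (i : ℕ) = N - 1 then 1 else 1 + ρ ^ 2)
      else if (i : ℕ) + 1 = k ∨ (k : ℕ) + 1 = i then -ρ else 0)
    (hA : A.IsHermitian) (i : Fin N) :
    (1 - ρ) ^ 2 ≤ hA.eigenvalues i ∧ hA.eigenvalues i ≤ (1 + ρ) ^ 2 := by
  set b : Fin N → ℝ := ⇑(hA.eigenvectorBasis i) with hb
  have hbb : b ⬝ᵥ b = 1 := by rw [hb, dot_eigb hA i i, if_pos rfl]
  have hQ : b ⬝ᵥ (A *ᵥ b) = hA.eigenvalues i := by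
    rw [hb, hA.mulVec_eigenvectorBasis i]
    rw [dotProduct_smul, ← hb, hbb]
    simp
  have := quad_bounds hρ₀ hρ₁ hAdef b
  rw [hQ, hbb] at this
  simpa using this

lemma dot_expand {N : ℕ} {A : Matrix (Fin N) (Fin N) ℝ} (hA : A.IsHermitian)
    (u v : Fin N → ℝ) :
    (∑ i, u i • (⇑(hA.eigenvectorBasis i) : Fin N → ℝ))
      ⬝ᵥ (∑ i, v i • (⇑(hA.eigenvectorBasis i) : Fin N → ℝ)) = ∑ i, u i * v i := by
  rw [sum_dotProduct']
  rw [Finset.sum_congr rfl (fun i _ => by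
    rw [smul_dotProduct, dotProduct_sum',
      Finset.sum_congr rfl (fun i' _ => by rw [dotProduct_smul, dot_eigb hA i i'])])]
  refine Finset.sum_congr rfl fun i _ => ?_
  rw [Finset.sum_eq_single i]
  · simp
  · intro i' _ hi'; simp [Ne.symm hi']
  · simp

lemma card_low {N j : ℕ} {A : Matrix (Fin N) (Fin N) ℝ} (hA : A.IsHermitian) {c : ℝ}
    (w : Fin j → Fin N → ℝ)
    (hw : ∀ a : Fin j → ℝ, a ≠ 0 →
      (∑ k, a k • w k) ⬝ᵥ (A *ᵥ (∑ k, a k • w k))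
        < c * ((∑ k, a k • w k) ⬝ᵥ (∑ k, a k • w k))) :
    j ≤ (Finset.univ.filter (fun i => hA.eigenvalues i < c)).card := by
  by_contra hcon
  push_neg at hcon
  set T := Finset.univ.filter (fun i => hA.eigenvalues i < c) with hT
  let L : (Fin j → ℝ) →ₗ[ℝ] ({i : Fin N // i ∈ T} → ℝ) :=
    { toFun := fun a => fun i =>
        (⇑(hA.eigenvectorBasis i.1) : Fin N → ℝ) ⬝ᵥ (∑ k, a k • w k)
      map_add' := by
        intro a a'
        funext i
        simp only [Pi.add_apply, add_smul, Finset.sum_add_distrib, dotProduct_add]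
      map_smul' := by
        intro r a
        funext i
        simp only [Pi.smul_apply, smul_eq_mul, RingHom.id_apply, ← smul_smul, ← Finset.smul_sum,
          dotProduct_smul] }
  have hnotinj : ¬ Function.Injective L := by
    intro hinj
    have h1 := LinearMap.finrank_le_finrank_of_injective hinj
    rw [Module.finrank_pi, Module.finrank_pi] at h1
    simp only [Fintype.card_coe, Fintype.card_fin] at h1
    omega
  obtain ⟨a1, a2, hab, hne⟩ := Function.not_injective_iff.mp hnotinj
  set d := a1 - a2 with hd
  have hd0 : d ≠ 0 := sub_ne_zero.mpr hne
  have hLd : L d = 0 := by rw [map_sub, hab, sub_self]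
  set x : Fin N → ℝ := ∑ k, d k • w k with hx
  set ci : Fin N → ℝ := fun i => (⇑(hA.eigenvectorBasis i) : Fin N → ℝ) ⬝ᵥ x with hci
  have hciT : ∀ i ∈ T, ci i = 0 := fun i hi => congrFun hLd ⟨i, hi⟩
  have hxrepr : x = ∑ i, ci i • (⇑(hA.eigenvectorBasis i) : Fin N → ℝ) := by
    have hrep := hA.eigenvectorBasis.sum_repr' (WithLp.toLp 2 x)
    have : ∀ i : Fin N, (inner ℝ (hA.eigenvectorBasis i) (WithLp.toLp 2 x) : ℝ) = ci i := fun i => by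
      rw [hci]
      simp [PiLp.inner_apply, dotProduct, mul_comm]
    rw [Finset.sum_congr rfl (fun i _ => by rw [this i])] at hrep
    have h2 := congrArg WithLp.ofLp hrep
    rw [WithLp.ofLp_sum] at h2
    simpa using h2.symm
  have hAx : A *ᵥ x = ∑ i, (hA.eigenvalues i * ci i) • (⇑(hA.eigenvectorBasis i) : Fin N → ℝ) := by
    conv_lhs => rw [hxrepr]
    rw [← Matrix.mulVecLin_apply, map_sum]
    refine Finset.sum_congr rfl fun i _ => ?_
    rw [_root_.map_smul, Matrix.mulVecLin_apply, hA.mulVec_eigenvectorBasis i, smul_smul, mul_comm]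
  have hQx : x ⬝ᵥ (A *ᵥ x) = ∑ i, hA.eigenvalues i * (ci i) ^ 2 := by
    rw [hAx]
    conv_lhs => rw [hxrepr]
    rw [dot_expand hA]
    exact Finset.sum_congr rfl fun i _ => by ring
  have hNx : x ⬝ᵥ x = ∑ i, (ci i) ^ 2 := by
    conv_lhs => rw [hxrepr]
    rw [dot_expand hA]
    exact Finset.sum_congr rfl fun i _ => by ring
  have hge : c * (x ⬝ᵥ x) ≤ x ⬝ᵥ (A *ᵥ x) := by
    rw [hQx, hNx, Finset.mul_sum]
    refine Finset.sum_le_sum fun i _ => ?_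
    by_cases hi : i ∈ T
    · rw [hciT i hi]; simp
    · have hlam : ¬ hA.eigenvalues i < c := by
        simpa [hT] using hi
      nlinarith [sq_nonneg (ci i), not_lt.mp hlam]
  exact absurd (hw d hd0) (not_lt.mpr hge)

lemma card_high {N j : ℕ} {A : Matrix (Fin N) (Fin N) ℝ} (hA : A.IsHermitian) {c : ℝ}
    (w : Fin j → Fin N → ℝ)
    (hw : ∀ a : Fin j → ℝ, a ≠ 0 →
      c * ((∑ k, a k • w k) ⬝ᵥ (∑ k, a k • w k))
        < (∑ k, a k • w k) ⬝ᵥ (A *ᵥ (∑ k, a k • w k))) :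
    j ≤ (Finset.univ.filter (fun i => c < hA.eigenvalues i)).card := by
  by_contra hcon
  push_neg at hcon
  set T := Finset.univ.filter (fun i => c < hA.eigenvalues i) with hT
  let L : (Fin j → ℝ) →ₗ[ℝ] ({i : Fin N // i ∈ T} → ℝ) :=
    { toFun := fun a => fun i =>
        (⇑(hA.eigenvectorBasis i.1) : Fin N → ℝ) ⬝ᵥ (∑ k, a k • w k)
      map_add' := by
        intro a a'
        funext i
        simp only [Pi.add_apply, add_smul, Finset.sum_add_distrib, dotProduct_add]
      map_smul' := by
        intro r a
        funext i
        simp only [Pi.smul_apply, smul_eq_mul, RingHom.id_apply, ← smul_smul, ← Finset.smul_sum,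
          dotProduct_smul] }
  have hnotinj : ¬ Function.Injective L := by
    intro hinj
    have h1 := LinearMap.finrank_le_finrank_of_injective hinj
    rw [Module.finrank_pi, Module.finrank_pi] at h1
    simp only [Fintype.card_coe, Fintype.card_fin] at h1
    omega
  obtain ⟨a1, a2, hab, hne⟩ := Function.not_injective_iff.mp hnotinj
  set d := a1 - a2 with hd
  have hd0 : d ≠ 0 := sub_ne_zero.mpr hne
  have hLd : L d = 0 := by rw [map_sub, hab, sub_self]
  set x : Fin N → ℝ := ∑ k, d k • w k with hx
  set ci : Fin N → ℝ := fun i => (⇑(hA.eigenvectorBasis i) : Fin N → ℝ) ⬝ᵥ x with hci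
  have hciT : ∀ i ∈ T, ci i = 0 := fun i hi => congrFun hLd ⟨i, hi⟩
  have hxrepr : x = ∑ i, ci i • (⇑(hA.eigenvectorBasis i) : Fin N → ℝ) := by
    have hrep := hA.eigenvectorBasis.sum_repr' (WithLp.toLp 2 x)
    have : ∀ i : Fin N, (inner ℝ (hA.eigenvectorBasis i) (WithLp.toLp 2 x) : ℝ) = ci i := fun i => by
      rw [hci]
      simp [PiLp.inner_apply, dotProduct, mul_comm]
    rw [Finset.sum_congr rfl (fun i _ => by rw [this i])] at hrep
    have h2 := congrArg WithLp.ofLp hrep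
    rw [WithLp.ofLp_sum] at h2
    simpa using h2.symm
  have hAx : A *ᵥ x = ∑ i, (hA.eigenvalues i * ci i) • (⇑(hA.eigenvectorBasis i) : Fin N → ℝ) := by
    conv_lhs => rw [hxrepr]
    rw [← Matrix.mulVecLin_apply, map_sum]
    refine Finset.sum_congr rfl fun i _ => ?_
    rw [_root_.map_smul, Matrix.mulVecLin_apply, hA.mulVec_eigenvectorBasis i, smul_smul, mul_comm]
  have hQx : x ⬝ᵥ (A *ᵥ x) = ∑ i, hA.eigenvalues i * (ci i) ^ 2 := by
    rw [hAx]
    conv_lhs => rw [hxrepr]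
    rw [dot_expand hA]
    exact Finset.sum_congr rfl fun i _ => by ring
  have hNx : x ⬝ᵥ x = ∑ i, (ci i) ^ 2 := by
    conv_lhs => rw [hxrepr]
    rw [dot_expand hA]
    exact Finset.sum_congr rfl fun i _ => by ring
  have hge : x ⬝ᵥ (A *ᵥ x) ≤ c * (x ⬝ᵥ x) := by
    rw [hQx, hNx, Finset.mul_sum]
    refine Finset.sum_le_sum fun i _ => ?_
    by_cases hi : i ∈ T
    · rw [hciT i hi]; simp
    · have hlam : ¬ c < hA.eigenvalues i := by
        simpa [hT] using hi
      nlinarith [sq_nonneg (ci i), not_lt.mp hlam]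
  exact absurd (hw d hd0) (not_lt.mpr hge)


lemma card_perm_filter {N : ℕ} (f : Fin N → ℝ) (sg : Equiv.Perm (Fin N))
    (p : ℝ → Prop) [DecidablePred p] :
    (Finset.univ.filter fun m => p (f (sg m))).card
      = (Finset.univ.filter fun i => p (f i)).card := by
  apply Finset.card_bij (fun m _ => sg m)
  · intro m hm
    simp only [Finset.mem_filter, Finset.mem_univ, true_and] at hm ⊢
    exact hm
  · intro m1 _ m2 _ h
    exact sg.injective h
  · intro i hi
    refine ⟨sg.symm i, ?_, by simp⟩
    simp only [Finset.mem_filter, Finset.mem_univ, true_and] at hi ⊢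
    simpa using hi

end Stmt12

open Stmt12 in
lemma sorted_low {N k : ℕ} {A : Matrix (Fin N) (Fin N) ℝ} (hA : A.IsHermitian)
    (hk : k < N) {c : ℝ}
    (h : k + 1 ≤ (Finset.univ.filter (fun i => hA.eigenvalues i < c)).card) :
    sortedEig hA ⟨k, hk⟩ < c := by
  set f := hA.eigenvalues
  set sg := Tuple.sort f
  have hmono : Monotone (f ∘ sg) := Tuple.monotone_sort f
  by_contra hge
  push_neg at hge
  have hsub : (Finset.univ.filter fun m : Fin N => f (sg m) < c)
      ⊆ Finset.univ.filter fun m : Fin N => (m : ℕ) < k := by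
    intro m hm
    simp only [Finset.mem_filter, Finset.mem_univ, true_and] at hm ⊢
    by_contra hmk
    push_neg at hmk
    have : sortedEig hA ⟨k, hk⟩ ≤ f (sg m) := hmono (by exact hmk : (⟨k, hk⟩ : Fin N) ≤ m)
    linarith
  have hcard1 : (Finset.univ.filter fun m : Fin N => (m : ℕ) < k).card ≤ k := by
    have := Finset.card_le_card_of_injOn (s := Finset.univ.filter fun m : Fin N => (m : ℕ) < k) (t := Finset.range k) (fun m : Fin N => (m : ℕ))
      (fun m hm => by
        have hm' : (m : ℕ) < k := by simpa using hm
        exact Finset.mem_range.mpr hm')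
      (fun m1 _ m2 _ h => Fin.ext h)
    exact le_trans this (le_of_eq (Finset.card_range _))
  have := (Finset.card_le_card hsub).trans hcard1
  rw [card_perm_filter f sg (fun y => y < c)] at this
  omega

open Stmt12 in
lemma sorted_high {N k : ℕ} {A : Matrix (Fin N) (Fin N) ℝ} (hA : A.IsHermitian)
    (hk : k < N) {c : ℝ}
    (h : N - k ≤ (Finset.univ.filter (fun i => c < hA.eigenvalues i)).card) :
    c < sortedEig hA ⟨k, hk⟩ := by
  set f := hA.eigenvalues
  set sg := Tuple.sort f
  have hmono : Monotone (f ∘ sg) := Tuple.monotone_sort f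
  by_contra hge
  push_neg at hge
  have hsub : (Finset.univ.filter fun m : Fin N => c < f (sg m))
      ⊆ Finset.univ.filter fun m : Fin N => k < (m : ℕ) := by
    intro m hm
    simp only [Finset.mem_filter, Finset.mem_univ, true_and] at hm ⊢
    by_contra hmk
    push_neg at hmk
    have : f (sg m) ≤ sortedEig hA ⟨k, hk⟩ := hmono (by exact hmk : m ≤ (⟨k, hk⟩ : Fin N))
    linarith
  have hcard1 : (Finset.univ.filter fun m : Fin N => k < (m : ℕ)).card ≤ N - k - 1 := by
    have := Finset.card_le_card_of_injOn (s := Finset.univ.filter fun m : Fin N => k < (m : ℕ)) (t := Finset.Ico (k+1) N) (fun m : Fin N => (m : ℕ))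
      (fun m hm => by
        have hm' : k < (m : ℕ) := by simpa using hm
        exact Finset.mem_Ico.mpr ⟨hm', m.isLt⟩)
      (fun m1 _ m2 _ h => Fin.ext h)
    refine le_trans this (le_of_eq ?_)
    rw [Nat.card_Ico]
    omega
  have := (Finset.card_le_card hsub).trans hcard1
  rw [card_perm_filter f sg (fun y => c < y)] at this
  omega

namespace Stmt12

def blk (N s m : ℕ) (v : ℕ → ℝ) : Fin N → ℝ :=
  fun i => if s ≤ (i : ℕ) ∧ (i : ℕ) < s + m then v i else 0

lemma ext_blk {N s m : ℕ} (v : ℕ → ℝ) (h : s + m ≤ N) (t : ℕ) :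
    ext (blk N s m v) t = if s ≤ t ∧ t < s + m then v t else 0 := by
  unfold ext blk
  rcases lt_or_ge t N with ht | ht
  · rw [dif_pos ht]
  · rw [dif_neg (by omega), if_neg (by omega)]

lemma pre_blk {N s m : ℕ} (v : ℕ → ℝ) (h : s + m ≤ N) (t : ℕ) :
    pre (blk N s m v) t = if s + 1 ≤ t ∧ t < s + m + 1 then v (t - 1) else 0 := by
  unfold pre
  cases t with
  | zero => rw [if_pos rfl, if_neg (by omega)]
  | succ r =>
      rw [if_neg (by omega), ext_blk v h]
      simp only [Nat.add_sub_cancel]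
      by_cases hc : s ≤ r ∧ r < s + m
      · rw [if_pos hc, if_pos (by omega)]
      · rw [if_neg hc, if_neg (by omega)]

lemma sum_indicator {N s m : ℕ} (c : ℝ) (h : s + m ≤ N) :
    (∑ t ∈ Finset.range N, (if s ≤ t ∧ t < s + m then c else 0)) = m * c := by
  rw [← Finset.sum_filter]
  have he : (Finset.range N).filter (fun t => s ≤ t ∧ t < s + m) = Finset.Ico s (s + m) := by
    ext t
    simp only [Finset.mem_filter, Finset.mem_range, Finset.mem_Ico]
    omega
  rw [he, Finset.sum_const, Nat.card_Ico, nsmul_eq_mul]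
  congr 1
  push_cast [Nat.add_sub_cancel_left]
  ring

lemma sum_single_le {N a : ℕ} {c : ℝ} (hc : 0 ≤ c) :
    (∑ t ∈ Finset.range N, (if t = a then c else 0)) ≤ c := by
  rw [Finset.sum_ite_eq' (Finset.range N) a (fun _ => c)]
  split <;> simp [hc]

lemma norm_blk {N s m : ℕ} (v : ℕ → ℝ) (h : s + m ≤ N) (hv : ∀ t, v t ^ 2 = 1) :
    ∑ t ∈ Finset.range N, (ext (blk N s m v) t) ^ 2 = m := by
  have hcong : ∀ t ∈ Finset.range N,
      (ext (blk N s m v) t) ^ 2 = (if s ≤ t ∧ t < s + m then (1:ℝ) else 0) := by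
    intro t _
    rw [ext_blk v h]
    split_ifs
    · exact hv t
    · norm_num
  rw [Finset.sum_congr rfl hcong, sum_indicator 1 h, mul_one]

variable {ρ : ℝ}

lemma rayleigh_low {N s m : ℕ} (hρ₀ : 0 < ρ) (hρ₁ : ρ < 1) (hm : 1 ≤ m) (h : s + m ≤ N) :
    ∑ t ∈ Finset.range N, (ext (blk N s m (fun _ => 1)) t
        - ρ * pre (blk N s m (fun _ => 1)) t) ^ 2
      ≤ 1 + (m - 1 : ℝ) * (1 - ρ) ^ 2 + ρ ^ 2 := by
  set v : ℕ → ℝ := fun _ => 1 with hvdef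
  have key : ∀ t ∈ Finset.range N, (ext (blk N s m v) t - ρ * pre (blk N s m v) t) ^ 2
      ≤ (if t = s then (1:ℝ) else 0) + (if s + 1 ≤ t ∧ t < s + m then (1 - ρ) ^ 2 else 0)
        + (if t = s + m then ρ ^ 2 else 0) := by
    intro t _
    rw [ext_blk v h, pre_blk v h]
    split_ifs <;>
      first
        | (exfalso; omega)
        | (simp only [hvdef]; nlinarith [sq_nonneg ρ, sq_nonneg (1 - ρ)])
        | nlinarith [sq_nonneg ρ, sq_nonneg (1 - ρ)]
  calc ∑ t ∈ Finset.range N, (ext (blk N s m v) t - ρ * pre (blk N s m v) t) ^ 2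
      ≤ ∑ t ∈ Finset.range N, ((if t = s then (1:ℝ) else 0)
          + (if s + 1 ≤ t ∧ t < s + m then (1 - ρ) ^ 2 else 0)
          + (if t = s + m then ρ ^ 2 else 0)) := Finset.sum_le_sum key
    _ ≤ 1 + (m - 1 : ℝ) * (1 - ρ) ^ 2 + ρ ^ 2 := by
        rw [Finset.sum_add_distrib, Finset.sum_add_distrib]
        have e1 := sum_single_le (N := N) (a := s) (c := (1:ℝ)) (by norm_num)
        have e3 := sum_single_le (N := N) (a := s + m) (c := ρ ^ 2) (sq_nonneg ρ)
        have e2 : (∑ t ∈ Finset.range N, (if s + 1 ≤ t ∧ t < s + m then (1 - ρ) ^ 2 else 0))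
            = (m - 1 : ℝ) * (1 - ρ) ^ 2 := by
          have hcong : ∀ t ∈ Finset.range N, (if s + 1 ≤ t ∧ t < s + m then ((1:ℝ) - ρ) ^ 2 else 0)
              = (if s + 1 ≤ t ∧ t < (s + 1) + (m - 1) then (1 - ρ) ^ 2 else 0) := by
            intro t _
            refine if_congr ?_ rfl rfl
            constructor <;> (intro hh; omega)
          rw [Finset.sum_congr rfl hcong, sum_indicator _ (by omega)]
          congr 1
          push_cast [Nat.cast_sub hm]
          ring
        rw [e2]
        linarith

lemma rayleigh_high {N s m : ℕ} (hρ₀ : 0 < ρ) (hρ₁ : ρ < 1) (hm : 1 ≤ m) (h : s + m ≤ N) :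
    (m - 1 : ℝ) * (1 + ρ) ^ 2
      ≤ ∑ t ∈ Finset.range N, (ext (blk N s m (fun t => (-1 : ℝ) ^ t)) t
          - ρ * pre (blk N s m (fun t => (-1 : ℝ) ^ t)) t) ^ 2 := by
  set v : ℕ → ℝ := fun t => (-1 : ℝ) ^ t with hvdef
  have key : ∀ t ∈ Finset.range N,
      (if s + 1 ≤ t ∧ t < s + m then ((1:ℝ) + ρ) ^ 2 else 0)
        ≤ (ext (blk N s m v) t - ρ * pre (blk N s m v) t) ^ 2 := by
    intro t _
    by_cases h2 : s + 1 ≤ t ∧ t < s + m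
    · rw [if_pos h2, ext_blk v h, pre_blk v h, if_pos (by omega), if_pos (by omega)]
      obtain ⟨r, rfl⟩ : ∃ r, t = r + 1 := ⟨t - 1, by omega⟩
      have hsq : ((-1 : ℝ) ^ r) ^ 2 = 1 := by
        rw [← pow_mul, mul_comm, pow_mul]
        norm_num
      have : (v (r + 1) - ρ * v (r + 1 - 1)) ^ 2 = ((-1:ℝ) ^ r) ^ 2 * (1 + ρ) ^ 2 := by
        simp only [hvdef, Nat.add_sub_cancel, pow_succ]
        ring
      rw [this, hsq, one_mul]
    · rw [if_neg h2]
      exact sq_nonneg _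
  have := Finset.sum_le_sum key
  refine le_trans (le_of_eq ?_) this
  have hcong : ∀ t ∈ Finset.range N, (if s + 1 ≤ t ∧ t < s + m then ((1:ℝ) + ρ) ^ 2 else 0)
      = (if s + 1 ≤ t ∧ t < (s + 1) + (m - 1) then (1 + ρ) ^ 2 else 0) := by
    intro t _
    refine if_congr ?_ rfl rfl
    constructor <;> (intro hh; omega)
  rw [Finset.sum_congr rfl hcong, sum_indicator _ (by omega)]
  push_cast [Nat.cast_sub hm]
  ring

end Stmt12

namespace Stmt12

lemma ext_sum {N j : ℕ} (w : Fin j → Fin N → ℝ) (a : Fin j → ℝ) (t : ℕ) :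
    ext (∑ k, a k • w k) t = ∑ k, a k * ext (w k) t := by
  unfold ext
  split_ifs with h
  · simp [Finset.sum_apply]
  · simp

lemma pre_sum {N j : ℕ} (w : Fin j → Fin N → ℝ) (a : Fin j → ℝ) (t : ℕ) :
    pre (∑ k, a k • w k) t = ∑ k, a k * pre (w k) t := by
  unfold pre
  split_ifs with h
  · simp
  · exact ext_sum w a (t - 1)

lemma sq_sum_of_orth {j : ℕ} (c : Fin j → ℝ)
    (h : ∀ k l : Fin j, k ≠ l → c k = 0 ∨ c l = 0) :
    (∑ k, c k) ^ 2 = ∑ k, (c k) ^ 2 := by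
  by_cases hz : ∀ k, c k = 0
  · simp [hz]
  · push_neg at hz
    obtain ⟨k0, hk0⟩ := hz
    have hother : ∀ k, k ≠ k0 → c k = 0 := fun k hk => (h k k0 hk).resolve_right hk0
    rw [Finset.sum_eq_single k0 (fun k _ hk => hother k hk)
        (fun hk => absurd (Finset.mem_univ k0) hk),
      Finset.sum_eq_single k0 (fun k _ hk => by rw [hother k hk]; norm_num)
        (fun hk => absurd (Finset.mem_univ k0) hk)]

variable {ρ : ℝ}

lemma blk_term_zero {N s m : ℕ} (v : ℕ → ℝ) (h : s + m ≤ N) (t : ℕ)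
    (ht : ¬(s ≤ t ∧ t ≤ s + m)) :
    (ext (blk N s m v) t - ρ * pre (blk N s m v) t = 0) ∧ ext (blk N s m v) t = 0 := by
  rw [ext_blk v h, pre_blk v h, if_neg (by omega), if_neg (by omega)]
  norm_num

lemma hsk_lemma {j m : ℕ} (N : ℕ) (hjm : j * (m + 1) ≤ N) (k : Fin j) :
    k.1 * (m + 1) + m ≤ N := by
  have hk : k.1 + 1 ≤ j := k.isLt
  have h1 : (k.1 + 1) * (m + 1) ≤ j * (m + 1) := Nat.mul_le_mul_right _ hk
  have hexp : (k.1 + 1) * (m + 1) = k.1 * (m + 1) + (m + 1) := by ring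
  omega

lemma blk_disj {N j m : ℕ} (hjm : j * (m + 1) ≤ N) (v : ℕ → ℝ) (t : ℕ)
    (k l : Fin j) (hkl : k ≠ l) :
    ((ext (blk N (k.1 * (m+1)) m v) t - ρ * pre (blk N (k.1 * (m+1)) m v) t = 0)
        ∧ ext (blk N (k.1 * (m+1)) m v) t = 0)
    ∨ ((ext (blk N (l.1 * (m+1)) m v) t - ρ * pre (blk N (l.1 * (m+1)) m v) t = 0)
        ∧ ext (blk N (l.1 * (m+1)) m v) t = 0) := by
  by_cases hk : k.1 * (m+1) ≤ t ∧ t ≤ k.1 * (m+1) + m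
  · right
    refine blk_term_zero v (hsk_lemma N hjm l) t ?_
    have hne : k.1 ≠ l.1 := fun hc => hkl (Fin.ext hc)
    rcases Nat.lt_or_ge k.1 l.1 with hlt | hge
    · have h1 : (k.1 + 1) * (m + 1) ≤ l.1 * (m + 1) := Nat.mul_le_mul_right _ hlt
      have hexp : (k.1 + 1) * (m + 1) = k.1 * (m + 1) + (m + 1) := by ring
      omega
    · have hlt : l.1 < k.1 := by omega
      have h1 : (l.1 + 1) * (m + 1) ≤ k.1 * (m + 1) := Nat.mul_le_mul_right _ hlt
      have hexp : (l.1 + 1) * (m + 1) = l.1 * (m + 1) + (m + 1) := by ring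
      omega
  · left
    exact blk_term_zero v (hsk_lemma N hjm k) t hk

lemma combo_quad {N j m : ℕ} (hjm : j * (m + 1) ≤ N) (v : ℕ → ℝ) (a : Fin j → ℝ) :
    ∑ t ∈ Finset.range N,
        (ext (∑ k, a k • blk N (k.1 * (m+1)) m v) t
          - ρ * pre (∑ k, a k • blk N (k.1 * (m+1)) m v) t) ^ 2
      = ∑ k, (a k) ^ 2 * (∑ t ∈ Finset.range N,
          (ext (blk N (k.1 * (m+1)) m v) t - ρ * pre (blk N (k.1 * (m+1)) m v) t) ^ 2) := by
  have hterm : ∀ t ∈ Finset.range N,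
      (ext (∑ k, a k • blk N (k.1 * (m+1)) m v) t
        - ρ * pre (∑ k, a k • blk N (k.1 * (m+1)) m v) t) ^ 2
      = ∑ k, (a k) ^ 2
          * (ext (blk N (k.1 * (m+1)) m v) t - ρ * pre (blk N (k.1 * (m+1)) m v) t) ^ 2 := by
    intro t _
    rw [ext_sum, pre_sum]
    have hcomb : (∑ k, a k * ext (blk N (k.1 * (m+1)) m v) t)
        - ρ * (∑ k, a k * pre (blk N (k.1 * (m+1)) m v) t)
        = ∑ k, (a k * (ext (blk N (k.1 * (m+1)) m v) t
            - ρ * pre (blk N (k.1 * (m+1)) m v) t)) := by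
      rw [Finset.mul_sum, ← Finset.sum_sub_distrib]
      exact Finset.sum_congr rfl fun k _ => by ring
    rw [hcomb, sq_sum_of_orth _ (fun k l hkl => by
      rcases blk_disj (ρ := ρ) hjm v t k l hkl with ⟨h1, _⟩ | ⟨h1, _⟩
      · left; rw [h1, mul_zero]
      · right; rw [h1, mul_zero])]
    exact Finset.sum_congr rfl fun k _ => by ring
  rw [Finset.sum_congr rfl hterm, Finset.sum_comm]
  exact Finset.sum_congr rfl fun k _ => (Finset.mul_sum _ _ _).symm

lemma combo_norm {N j m : ℕ} (hjm : j * (m + 1) ≤ N) (v : ℕ → ℝ) (a : Fin j → ℝ) :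
    ∑ t ∈ Finset.range N, (ext (∑ k, a k • blk N (k.1 * (m+1)) m v) t) ^ 2
      = ∑ k, (a k) ^ 2
          * (∑ t ∈ Finset.range N, (ext (blk N (k.1 * (m+1)) m v) t) ^ 2) := by
  have hterm : ∀ t ∈ Finset.range N,
      (ext (∑ k, a k • blk N (k.1 * (m+1)) m v) t) ^ 2
      = ∑ k, (a k) ^ 2 * (ext (blk N (k.1 * (m+1)) m v) t) ^ 2 := by
    intro t _
    rw [ext_sum]
    rw [sq_sum_of_orth _ (fun k l hkl => by
      rcases blk_disj (ρ := 0) hjm v t k l hkl with ⟨_, h2⟩ | ⟨_, h2⟩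
      · left; rw [h2, mul_zero]
      · right; rw [h2, mul_zero])]
    exact Finset.sum_congr rfl fun k _ => by ring
  rw [Finset.sum_congr rfl hterm, Finset.sum_comm]
  exact Finset.sum_congr rfl fun k _ => (Finset.mul_sum _ _ _).symm

end Stmt12

open Stmt12 in
/-- For `0 < ρ < 1` and the tridiagonal matrix `A_{0,n}` with diagonal
`(1+ρ², …, 1+ρ², 1)` and off-diagonal entries `-ρ`, for each fixed `j ≥ 1` the `j`-th
smallest eigenvalue converges to `(1-ρ)²` and the `j`-th largest to `(1+ρ)²` as `n → ∞`. -/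
theorem stmt_12 (ρ : ℝ) (hρ₀ : 0 < ρ) (hρ₁ : ρ < 1) (j : ℕ) (hj : 1 ≤ j)
    (A : (n : ℕ) → Matrix (Fin n) (Fin n) ℝ)
    (hAdef : ∀ n, ∀ i k : Fin n, A n i k =
      if i = k then (if (i : ℕ) = n - 1 then 1 else 1 + ρ ^ 2)
      else if (i : ℕ) + 1 = k ∨ (k : ℕ) + 1 = i then -ρ else 0)
    (hHerm : ∀ n, (A n).IsHermitian) :
    Tendsto (fun n : ℕ => sortedEig (hHerm (n + j)) ⟨j - 1, by omega⟩)
        atTop (nhds ((1 - ρ) ^ 2)) ∧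
    Tendsto (fun n : ℕ => sortedEig (hHerm (n + j)) ⟨n, by omega⟩)
        atTop (nhds ((1 + ρ) ^ 2)) := by
  have h4 : ∀ ε : ℝ, 0 < ε → ∃ m : ℕ, 1 ≤ m ∧ 4 < ε * m := by
    intro ε hε
    obtain ⟨m0, hm0⟩ := exists_nat_gt (4 / ε)
    refine ⟨m0 + 1, by omega, ?_⟩
    have h1 : 4 / ε < ((m0 + 1 : ℕ) : ℝ) := lt_of_lt_of_le hm0 (by exact_mod_cast Nat.le_succ m0)
    rw [div_lt_iff₀ hε] at h1
    push_cast at h1 ⊢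
    nlinarith
  constructor
  · rw [Metric.tendsto_atTop]
    intro ε hε
    obtain ⟨m, hm1, hεm⟩ := h4 ε hε
    refine ⟨j * (m + 1), fun n hn => ?_⟩
    have hjm : j * (m + 1) ≤ n + j := le_trans hn (Nat.le_add_right n j)
    have hAd := hAdef (n + j)
    have hEig := fun i => Stmt12.eig_bounds hρ₀ hρ₁ hAd (hHerm (n + j)) i
    have hjlt : j - 1 < n + j := by omega
    have hlow : (1 - ρ) ^ 2 ≤ sortedEig (hHerm (n + j)) ⟨j - 1, hjlt⟩ :=
      (hEig (Tuple.sort (hHerm (n + j)).eigenvalues ⟨j - 1, hjlt⟩)).1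
    have hmr : (1 : ℝ) ≤ (m : ℝ) := by exact_mod_cast hm1
    have hup : sortedEig (hHerm (n + j)) ⟨j - 1, hjlt⟩ < (1 - ρ) ^ 2 + ε := by
      refine sorted_low (hHerm (n + j)) hjlt ?_
      have hray : ∀ a : Fin j → ℝ, a ≠ 0 →
          (∑ k, a k • blk (n + j) (k.1 * (m + 1)) m (fun _ => 1))
              ⬝ᵥ ((A (n + j)) *ᵥ (∑ k, a k • blk (n + j) (k.1 * (m + 1)) m (fun _ => 1)))
            < ((1 - ρ) ^ 2 + ε)
              * ((∑ k, a k • blk (n + j) (k.1 * (m + 1)) m (fun _ => 1))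
                  ⬝ᵥ (∑ k, a k • blk (n + j) (k.1 * (m + 1)) m (fun _ => 1))) := by
        intro a ha
        rw [Stmt12.quadForm hAd, Stmt12.normSq, Stmt12.combo_quad hjm, Stmt12.combo_norm hjm]
        have hQk : ∀ k : Fin j, (∑ t ∈ Finset.range (n + j),
            (ext (blk (n + j) (k.1 * (m + 1)) m (fun _ => 1)) t
              - ρ * pre (blk (n + j) (k.1 * (m + 1)) m (fun _ => 1)) t) ^ 2)
            ≤ 1 + (m - 1 : ℝ) * (1 - ρ) ^ 2 + ρ ^ 2 :=
          fun k => rayleigh_low hρ₀ hρ₁ hm1 (hsk_lemma _ hjm k)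
        have hNk : ∀ k : Fin j, (∑ t ∈ Finset.range (n + j),
            (ext (blk (n + j) (k.1 * (m + 1)) m (fun _ => 1)) t) ^ 2) = (m : ℝ) :=
          fun k => norm_blk _ (hsk_lemma _ hjm k) (fun t => one_pow 2)
        have hNs : (∑ k, (a k) ^ 2 * (∑ t ∈ Finset.range (n + j),
            (ext (blk (n + j) (k.1 * (m + 1)) m (fun _ => 1)) t) ^ 2))
            = (∑ k, (a k) ^ 2) * (m : ℝ) := by
          rw [Finset.sum_congr rfl (fun k (_ : k ∈ Finset.univ) => by rw [hNk k]),
            ← Finset.sum_mul]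
        rw [hNs]
        obtain ⟨k0, hk0⟩ := Function.ne_iff.mp ha
        have hk0' : a k0 ≠ 0 := by simpa using hk0
        have hpos : 0 < ∑ k, (a k) ^ 2 :=
          Finset.sum_pos' (fun k _ => sq_nonneg _)
            ⟨k0, Finset.mem_univ _, sq_pos_of_ne_zero hk0'⟩
        have hstep : (∑ k, (a k) ^ 2 * (∑ t ∈ Finset.range (n + j),
              (ext (blk (n + j) (k.1 * (m + 1)) m (fun _ => 1)) t
                - ρ * pre (blk (n + j) (k.1 * (m + 1)) m (fun _ => 1)) t) ^ 2))
            ≤ (∑ k, (a k) ^ 2) * (1 + (m - 1 : ℝ) * (1 - ρ) ^ 2 + ρ ^ 2) := by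
          rw [Finset.sum_mul]
          exact Finset.sum_le_sum fun k _ => mul_le_mul_of_nonneg_left (hQk k) (sq_nonneg _)
        have hB : (1 + (m - 1 : ℝ) * (1 - ρ) ^ 2 + ρ ^ 2) < ((1 - ρ) ^ 2 + ε) * m := by
          nlinarith
        refine lt_of_le_of_lt hstep ?_
        calc (∑ k, (a k) ^ 2) * (1 + (m - 1 : ℝ) * (1 - ρ) ^ 2 + ρ ^ 2)
            < (∑ k, (a k) ^ 2) * (((1 - ρ) ^ 2 + ε) * m) := (mul_lt_mul_iff_right₀ hpos).mpr hB
          _ = ((1 - ρ) ^ 2 + ε) * ((∑ k, (a k) ^ 2) * m) := by ring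
      have hcard := Stmt12.card_low (hHerm (n + j))
        (fun k : Fin j => blk (n + j) (k.1 * (m + 1)) m (fun _ => 1)) hray
      have hj' : j - 1 + 1 = j := by omega
      rw [hj']
      exact hcard
    rw [Real.dist_eq, abs_lt]
    constructor <;> [linarith; linarith]
  · rw [Metric.tendsto_atTop]
    intro ε hε
    obtain ⟨m, hm1, hεm⟩ := h4 ε hε
    refine ⟨j * (m + 1), fun n hn => ?_⟩
    have hjm : j * (m + 1) ≤ n + j := le_trans hn (Nat.le_add_right n j)
    have hAd := hAdef (n + j)
    have hEig := fun i => Stmt12.eig_bounds hρ₀ hρ₁ hAd (hHerm (n + j)) i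
    have hnlt : n < n + j := by omega
    have hup : sortedEig (hHerm (n + j)) ⟨n, hnlt⟩ ≤ (1 + ρ) ^ 2 :=
      (hEig (Tuple.sort (hHerm (n + j)).eigenvalues ⟨n, hnlt⟩)).2
    have hmr : (1 : ℝ) ≤ (m : ℝ) := by exact_mod_cast hm1
    have hv : ∀ t : ℕ, ((-1 : ℝ) ^ t) ^ 2 = 1 := by
      intro t
      rw [← pow_mul, mul_comm, pow_mul]
      norm_num
    have hlow : (1 + ρ) ^ 2 - ε < sortedEig (hHerm (n + j)) ⟨n, hnlt⟩ := by
      refine sorted_high (hHerm (n + j)) hnlt ?_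
      have hray : ∀ a : Fin j → ℝ, a ≠ 0 →
          ((1 + ρ) ^ 2 - ε)
              * ((∑ k, a k • blk (n + j) (k.1 * (m + 1)) m (fun t => (-1 : ℝ) ^ t))
                  ⬝ᵥ (∑ k, a k • blk (n + j) (k.1 * (m + 1)) m (fun t => (-1 : ℝ) ^ t)))
            < (∑ k, a k • blk (n + j) (k.1 * (m + 1)) m (fun t => (-1 : ℝ) ^ t))
              ⬝ᵥ ((A (n + j)) *ᵥ (∑ k, a k • blk (n + j) (k.1 * (m + 1)) m
                  (fun t => (-1 : ℝ) ^ t))) := by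
        intro a ha
        rw [Stmt12.quadForm hAd, Stmt12.normSq, Stmt12.combo_quad hjm, Stmt12.combo_norm hjm]
        have hQk : ∀ k : Fin j, (m - 1 : ℝ) * (1 + ρ) ^ 2
            ≤ (∑ t ∈ Finset.range (n + j),
              (ext (blk (n + j) (k.1 * (m + 1)) m (fun t => (-1 : ℝ) ^ t)) t
                - ρ * pre (blk (n + j) (k.1 * (m + 1)) m (fun t => (-1 : ℝ) ^ t)) t) ^ 2) :=
          fun k => rayleigh_high hρ₀ hρ₁ hm1 (hsk_lemma _ hjm k)
        have hNk : ∀ k : Fin j, (∑ t ∈ Finset.range (n + j),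
            (ext (blk (n + j) (k.1 * (m + 1)) m (fun t => (-1 : ℝ) ^ t)) t) ^ 2) = (m : ℝ) :=
          fun k => norm_blk _ (hsk_lemma _ hjm k) hv
        have hNs : (∑ k, (a k) ^ 2 * (∑ t ∈ Finset.range (n + j),
            (ext (blk (n + j) (k.1 * (m + 1)) m (fun t => (-1 : ℝ) ^ t)) t) ^ 2))
            = (∑ k, (a k) ^ 2) * (m : ℝ) := by
          rw [Finset.sum_congr rfl (fun k (_ : k ∈ Finset.univ) => by rw [hNk k]),
            ← Finset.sum_mul]
        rw [hNs]
        obtain ⟨k0, hk0⟩ := Function.ne_iff.mp ha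
        have hk0' : a k0 ≠ 0 := by simpa using hk0
        have hpos : 0 < ∑ k, (a k) ^ 2 :=
          Finset.sum_pos' (fun k _ => sq_nonneg _)
            ⟨k0, Finset.mem_univ _, sq_pos_of_ne_zero hk0'⟩
        have hstep : (∑ k, (a k) ^ 2) * ((m - 1 : ℝ) * (1 + ρ) ^ 2)
            ≤ ∑ k, (a k) ^ 2 * (∑ t ∈ Finset.range (n + j),
              (ext (blk (n + j) (k.1 * (m + 1)) m (fun t => (-1 : ℝ) ^ t)) t
                - ρ * pre (blk (n + j) (k.1 * (m + 1)) m (fun t => (-1 : ℝ) ^ t)) t) ^ 2) := by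
          rw [Finset.sum_mul]
          exact Finset.sum_le_sum fun k _ => mul_le_mul_of_nonneg_left (hQk k) (sq_nonneg _)
        refine lt_of_lt_of_le ?_ hstep
        have hB : ((1 + ρ) ^ 2 - ε) * m < (m - 1 : ℝ) * (1 + ρ) ^ 2 := by
          nlinarith
        calc ((1 + ρ) ^ 2 - ε) * ((∑ k, (a k) ^ 2) * m)
            = (∑ k, (a k) ^ 2) * (((1 + ρ) ^ 2 - ε) * m) := by ring
          _ < (∑ k, (a k) ^ 2) * ((m - 1 : ℝ) * (1 + ρ) ^ 2) := (mul_lt_mul_iff_right₀ hpos).mpr hB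
      have hcard := Stmt12.card_high (hHerm (n + j))
        (fun k : Fin j => blk (n + j) (k.1 * (m + 1)) m (fun t => (-1 : ℝ) ^ t)) hray
      have hj' : n + j - n = j := by omega
      rw [hj']
      exact hcard
    rw [Real.dist_eq, abs_lt]
    constructor <;> [linarith; linarith]
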